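/- arXiv:2105.04138 — 4 statements merged into one kernel-verified Lean document; each statement's English description precedes it below -/
import Mathlib

section
/- Let G be a simple graph on a finite vertex type V, let N and l be natural numbers with l ≥ 1, and let f : ZMod (2l+1) → V be an injective map forming an empty odd cycle in G, i.e., for all i ≠ j, f(i) and f(j) are adjacent in G if and only if j = i + 1 or i = j + 1 (indices in ZMod (2l+1)). Let T : V → Finset (Fin N) be a schedule such that adjacent vertices have disjoint slot sets. Then ∑_{i ∈ ZMod (2l+1)} |T(f(i))| ≤ l · N. -/
/-! Each time slot is used by an independent set of the cycle, and a set of indices in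
`ZMod (2 * l + 1)` containing no two consecutive ones has at most `l` elements; summing over
the `N` slots gives the bound. -/

open Finset

theorem Finset.sum_card_le_card_mul_of_forall_card_filter_mem_le {ι α : Type*} [Fintype ι]
    [Fintype α] [DecidableEq α] (A : ι → Finset α) {k : ℕ} (h : ∀ a, #{i | a ∈ A i} ≤ k) :
    ∑ i, #(A i) ≤ Fintype.card α * k := by
  calc ∑ i, #(A i) = ∑ a, #{i | a ∈ A i} := by
        simpa [bipartiteAbove, bipartiteBelow] using
          sum_card_bipartiteAbove_eq_sum_card_bipartiteBelow (s := univ) (t := univ)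
            (fun i a => a ∈ A i)
    _ ≤ ∑ _a : α, k := sum_le_sum fun a _ => h a
    _ = Fintype.card α * k := by rw [sum_const, card_univ, smul_eq_mul]

theorem Finset.two_mul_card_le_of_forall_add_notMem {α : Type*} [AddGroup α] [Fintype α]
    [DecidableEq α] {S : Finset α} (c : α) (h : ∀ i ∈ S, i + c ∉ S) :
    2 * #S ≤ Fintype.card α := by
  have hdisj : Disjoint S (S.image (· + c)) := by
    rw [disjoint_left]
    intro x hx hx'
    obtain ⟨y, hy, rfl⟩ := mem_image.mp hx'
    exact h y hy hx
  calc 2 * #S = #(S ∪ S.image (· + c)) := by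
        rw [card_union_of_disjoint hdisj, card_image_of_injective _ (add_left_injective c),
          two_mul]
    _ ≤ Fintype.card α := card_le_univ _

theorem ZMod.card_le_of_forall_add_one_notMem {l : ℕ} {S : Finset (ZMod (2 * l + 1))}
    (h : ∀ i ∈ S, i + 1 ∉ S) : #S ≤ l := by
  have := two_mul_card_le_of_forall_add_notMem 1 h
  rw [ZMod.card] at this
  omega

theorem empty_odd_cycle_schedule_sum_le_general
    {V : Type*} (G : SimpleGraph V) (N l : ℕ) (hl : 1 ≤ l)
    (f : ZMod (2 * l + 1) → V)
    (hcyc : ∀ i j : ZMod (2 * l + 1), i ≠ j →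
      (G.Adj (f i) (f j) ↔ (j = i + 1 ∨ i = j + 1)))
    (T : V → Finset (Fin N))
    (hT : ∀ u v : V, G.Adj u v → Disjoint (T u) (T v)) :
    ∑ i : ZMod (2 * l + 1), (T (f i)).card ≤ l * N := by
  have : Fact (1 < 2 * l + 1) := ⟨by omega⟩
  have hadj (i : ZMod (2 * l + 1)) : G.Adj (f i) (f (i + 1)) :=
    (hcyc i (i + 1) (by simp)).mpr (Or.inl rfl)
  have hslot (t : Fin N) : #{i | t ∈ T (f i)} ≤ l :=
    ZMod.card_le_of_forall_add_one_notMem fun i hi hi1 =>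
      disjoint_left.mp (hT _ _ (hadj i)) (mem_filter.mp hi).2 (mem_filter.mp hi1).2
  simpa [mul_comm] using sum_card_le_card_mul_of_forall_card_filter_mem_le (T ∘ f) hslot

theorem empty_odd_cycle_schedule_sum_le
    {V : Type*} [Fintype V] (G : SimpleGraph V) (N l : ℕ) (hl : 1 ≤ l)
    (f : ZMod (2 * l + 1) → V) (hf : Function.Injective f)
    (hcyc : ∀ i j : ZMod (2 * l + 1), i ≠ j →
      (G.Adj (f i) (f j) ↔ (j = i + 1 ∨ i = j + 1)))
    (T : V → Finset (Fin N))
    (hT : ∀ u v : V, G.Adj u v → Disjoint (T u) (T v)) :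
    ∑ i : ZMod (2 * l + 1), (T (f i)).card ≤ l * N :=
  empty_odd_cycle_schedule_sum_le_general G N l hl f hcyc T hT
end

section
/- Let G be a simple graph on a finite vertex type V, let N and α be natural numbers, and let T : V → Finset (Fin N) be a schedule such that adjacent vertices have disjoint slot sets. If every independent set of G has cardinality at most α, then ∑_{v ∈ V} |T(v)| ≤ α · N. -/
/-! The users of any one slot form an independent set, so counting user–slot incidences slot by
slot bounds the total by `α` per slot. -/

open Finset

theorem Finset.sum_card_eq_sum_card_filter_mem {V ι : Type*} [Fintype V] [Fintype ι]
    [DecidableEq ι] (T : V → Finset ι) : ∑ v, #(T v) = ∑ i, #{v | i ∈ T v} := by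
  simpa [bipartiteAbove, bipartiteBelow] using
    sum_card_bipartiteAbove_eq_sum_card_bipartiteBelow (fun v i ↦ i ∈ T v)
      (s := univ) (t := univ)

theorem SimpleGraph.isIndepSet_setOf_mem_of_adj_disjoint {V ι : Type*} {G : SimpleGraph V}
    {T : V → Finset ι} (hT : ∀ u v, G.Adj u v → Disjoint (T u) (T v)) (i : ι) :
    G.IsIndepSet {v | i ∈ T v} :=
  fun _ hu _ hv _ hadj ↦ Finset.disjoint_left.mp (hT _ _ hadj) hu hv

theorem schedule_sum_le_indepNumber_mul
    {V : Type*} [Fintype V] (G : SimpleGraph V) (N α : ℕ)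
    (T : V → Finset (Fin N))
    (hT : ∀ u v : V, G.Adj u v → Disjoint (T u) (T v))
    (hα : ∀ S : Finset V, (∀ u ∈ S, ∀ v ∈ S, u ≠ v → ¬ G.Adj u v) → S.card ≤ α) :
    ∑ v : V, (T v).card ≤ α * N := by
  have slot_card_le (n : Fin N) : #{v | n ∈ T v} ≤ α := by
    refine hα _ fun u hu v hv ↦ ?_
    exact SimpleGraph.isIndepSet_setOf_mem_of_adj_disjoint hT n (by simpa using hu)
      (by simpa using hv)
  calc ∑ v, #(T v) = ∑ n, #{v | n ∈ T v} := sum_card_eq_sum_card_filter_mem T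
    _ ≤ ∑ _n : Fin N, α := sum_le_sum fun n _ ↦ slot_card_le n
    _ = α * N := by simp [mul_comm]
end

section
/- Let G be a simple graph on a finite vertex type V, let N be a natural number, d : V → ℕ a requirement function, and let S₁, …, S_m be pairwise disjoint cliques of G such that ∑_{v ∈ S_i} d(v) ≥ N for every i. Then for every schedule T : V → Finset (Fin N) in which adjacent vertices have disjoint slot sets and |T(v)| ≤ d(v) for all v, the total number of unfulfilled requirements satisfies ∑_{v ∈ V} (d(v) − |T(v)|) ≥ ∑_{i=1}^{m} ((∑_{v ∈ S_i} d(v)) − N) (as integers). -/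
/-!
The members of a clique receive pairwise disjoint sets of slots, so together they receive at most
`N` slots and leave at least `∑_{v ∈ S i} d v - N` of their requirement unfulfilled. Since the
cliques are disjoint and every user's deficit `d v - |T v|` is nonnegative, these clique deficits
add up to at most the total deficit.
-/

open Finset

namespace SimpleGraph.IsClique

variable {V α : Type*} {G : SimpleGraph V} {s : Finset V} {T : V → Finset α}

theorem sum_card_le_card [Fintype α] (hs : G.IsClique (s : Set V))
    (hT : ∀ u v, G.Adj u v → Disjoint (T u) (T v)) :
    ∑ v ∈ s, (T v).card ≤ Fintype.card α := by
  have hdisj : (s : Set V).PairwiseDisjoint T := fun u hu v hv huv => hT u v (hs hu hv huv)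
  rw [← card_disjiUnion s T hdisj]
  exact card_le_univ _

theorem sum_sub_card_le_sum_sub_card {N : ℕ} {T : V → Finset (Fin N)} (d : V → ℕ)
    (hs : G.IsClique (s : Set V)) (hT : ∀ u v, G.Adj u v → Disjoint (T u) (T v)) :
    ∑ v ∈ s, (d v : ℤ) - N ≤ ∑ v ∈ s, ((d v : ℤ) - (T v).card) := by
  have hcard : ∑ v ∈ s, ((T v).card : ℤ) ≤ N := by
    exact_mod_cast (Fintype.card_fin N ▸ hs.sum_card_le_card hT)
  rw [sum_sub_distrib]
  linarith

end SimpleGraph.IsClique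

theorem Finset.sum_sum_le_univ_sum_of_pairwiseDisjoint {ι V M : Type*} [Fintype V]
    [AddCommMonoid M] [PartialOrder M] [IsOrderedAddMonoid M] {f : V → M} (hf : ∀ v, 0 ≤ f v)
    (S : ι → Finset V) (t : Finset ι) (hS : (t : Set ι).PairwiseDisjoint S) :
    ∑ i ∈ t, ∑ v ∈ S i, f v ≤ ∑ v, f v := by
  rw [← sum_disjiUnion t S hS]
  exact sum_le_univ_sum_of_nonneg hf

theorem disjoint_cliques_unfulfilled_lower_bound_general
    {V : Type*} [Fintype V] (G : SimpleGraph V) (N : ℕ)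
    (d : V → ℕ) (m : ℕ) (S : Fin m → Finset V)
    (hdisj : ∀ i j : Fin m, i ≠ j → Disjoint (S i) (S j))
    (hclique : ∀ i : Fin m, G.IsClique ((S i : Set V)))
    (T : V → Finset (Fin N))
    (hT : ∀ u v : V, G.Adj u v → Disjoint (T u) (T v))
    (hle : ∀ v : V, (T v).card ≤ d v) :
    ∑ v : V, ((d v : ℤ) - ((T v).card : ℤ)) ≥
      ∑ i : Fin m, ((∑ v ∈ S i, (d v : ℤ)) - N) := by
  have hdeficit : ∀ v, (0 : ℤ) ≤ (d v : ℤ) - (T v).card := fun v => by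
    have := hle v
    omega
  calc ∑ i : Fin m, ((∑ v ∈ S i, (d v : ℤ)) - N)
      ≤ ∑ i : Fin m, ∑ v ∈ S i, ((d v : ℤ) - (T v).card) :=
        sum_le_sum fun i _ => (hclique i).sum_sub_card_le_sum_sub_card d hT
    _ ≤ ∑ v : V, ((d v : ℤ) - (T v).card) :=
        sum_sum_le_univ_sum_of_pairwiseDisjoint hdeficit S univ
          fun i _ j _ hij => hdisj i j hij

theorem disjoint_cliques_unfulfilled_lower_bound
    {V : Type*} [Fintype V] (G : SimpleGraph V) (N : ℕ)
    (d : V → ℕ) (m : ℕ) (S : Fin m → Finset V)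
    (hdisj : ∀ i j : Fin m, i ≠ j → Disjoint (S i) (S j))
    (hclique : ∀ i : Fin m, G.IsClique ((S i : Set V)))
    (hsum : ∀ i : Fin m, N ≤ ∑ v ∈ S i, d v)
    (T : V → Finset (Fin N))
    (hT : ∀ u v : V, G.Adj u v → Disjoint (T u) (T v))
    (hle : ∀ v : V, (T v).card ≤ d v) :
    ∑ v : V, ((d v : ℤ) - ((T v).card : ℤ)) ≥
      ∑ i : Fin m, ((∑ v ∈ S i, (d v : ℤ)) - N) :=
  disjoint_cliques_unfulfilled_lower_bound_general G N d m S hdisj hclique T hT hle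
end

section
/- For every real number a > 0, the function f(x) = x · (2^{a/x} − 1) is strictly decreasing on the set of positive reals, i.e., StrictAntiOn (fun x => x * (2^{a/x} − 1)) (Set.Ioi 0). -/
open Real Set

/-- The perspective `x ↦ x (f (a/x) - f 0)` of a strictly convex `f` is `a` times the slope of the
secant of `f` through `0` and `a/x`, which increases with `a/x` and hence decreases with `x`. -/
theorem strictAntiOn_mul_sub_comp_div {f : ℝ → ℝ} (hf : StrictConvexOn ℝ (Ici 0) f) {a : ℝ}
    (ha : 0 < a) : StrictAntiOn (fun x => x * (f (a / x) - f 0)) (Ioi 0) := by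
  intro x (hx : 0 < x) y (hy : 0 < y) hxy
  have hay : 0 < a / y := div_pos ha hy
  have hslope : (f (a / y) - f 0) / (a / y) < (f (a / x) - f 0) / (a / x) := by
    simpa only [sub_zero] using hf.secant_strict_mono self_mem_Ici hay.le (div_pos ha hx).le
      hay.ne' (div_pos ha hx).ne' (div_lt_div_of_pos_left ha hx hxy)
  have hperspective : ∀ z, 0 < z → z * (f (a / z) - f 0) = a * ((f (a / z) - f 0) / (a / z)) := by
    intro z hz
    field_simp
  simp only [hperspective x hx, hperspective y hy]
  exact mul_lt_mul_of_pos_left hslope ha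

theorem strictConvexOn_rpow_left {b : ℝ} (hb : 1 < b) :
    StrictConvexOn ℝ univ fun x : ℝ => b ^ x := by
  refine ⟨convex_univ, fun x _ y _ hxy α β hα hβ hαβ => ?_⟩
  have hlog : 0 < log b := log_pos hb
  have hexp := strictConvexOn_exp.2 (mem_univ (log b * x)) (mem_univ (log b * y))
    (by simpa [hlog.ne'] using hxy) hα hβ hαβ
  simp only [rpow_def_of_pos (zero_lt_one.trans hb), smul_eq_mul] at hexp ⊢
  convert hexp using 2
  ring

theorem power_objective_strictAntiOn (a : ℝ) (ha : 0 < a) :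
    StrictAntiOn (fun x : ℝ => x * ((2 : ℝ) ^ (a / x) - 1)) (Set.Ioi (0 : ℝ)) := by
  simpa using strictAntiOn_mul_sub_comp_div
    ((strictConvexOn_rpow_left one_lt_two).subset (subset_univ _) (convex_Ici 0)) ha
end
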